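/- arXiv:1911.04859 — 7 statements merged into one kernel-verified Lean document; each statement's English description precedes it below -/
import Mathlib

section
/- Let α ∈ (0,1), α₀, β₀ > 0, λ ∈ ℂ, and let a, b be continuous complex-valued functions on [−1,1] with a not identically zero. Assume (2^α/(α·Γ(α)))·‖b‖_{∞,[−1,1]} + |λ| < (1/β₀)·ln(α·Γ(α)/(e·α₀·β₀·2^α·‖a‖_{∞,[−1,1]})). Then the equation r = (α₀·2^α/(α·Γ(α)))·‖a‖_{∞,[−1,1]}·e^{β₀·r} + (2^α/(α·Γ(α)))·‖b‖_{∞,[−1,1]} + |λ| has exactly two solutions R₀ < R₁ in [0,∞), and they satisfy 0 < R₀ < (1/β₀)·ln(α·Γ(α)/(α₀·β₀·2^α·‖a‖_{∞,[−1,1]})) < R₁. -/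
/-! With `A = α₀ 2^α ‖a‖ / (α Γ(α))` and `B = 2^α ‖b‖ / (α Γ(α)) + |λ|`, the function
`g r = A e^{β₀ r} + B - r` has derivative `A β₀ e^{β₀ r} - 1`, which changes sign exactly at
`r⋆ = β₀⁻¹ log (1 / (A β₀))`; so `g` is strictly decreasing on `(-∞, r⋆]` and strictly increasing
on `[r⋆, ∞)`. The hypothesis says precisely that `g r⋆ = 1/β₀ + B - r⋆ < 0`, while `g 0 = A + B > 0`
and `g r → ∞`, so the intermediate value theorem gives one root on each side of `r⋆`, and strict
monotonicity excludes any other. -/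

/-- `‖f‖_{∞,[−1,1]}`, the supremum of `‖f‖` over `[−1,1]`. -/
noncomputable def supSeg (f : ℝ → ℂ) : ℝ := ⨆ t : Set.Icc (-1 : ℝ) 1, ‖f t.1‖

open Real Set Filter

section ExpFixedPoint

variable {A β : ℝ}

lemma mul_mul_exp_eq_exp_sub (hA : 0 < A) (hβ : 0 < β) (r : ℝ) :
    A * β * exp (β * r) = exp (β * (r - 1 / β * log (1 / (A * β)))) := by
  rw [mul_sub, exp_sub, show β * (1 / β * log (1 / (A * β))) = log (1 / (A * β)) by
    field_simp, exp_log (by positivity)]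
  field_simp

lemma hasDerivAt_mul_exp_add_sub (A B β r : ℝ) :
    HasDerivAt (fun r => A * exp (β * r) + B - r) (A * β * exp (β * r) - 1) r := by
  have h := ((((hasDerivAt_id r).const_mul β).exp.const_mul A).add_const B).sub (hasDerivAt_id r)
  simp only [id, mul_one] at h
  rwa [mul_assoc, mul_comm β (exp _)]

lemma strictAntiOn_mul_exp_add_sub (hA : 0 < A) (hβ : 0 < β) (B : ℝ) :
    StrictAntiOn (fun r => A * exp (β * r) + B - r) (Iic (1 / β * log (1 / (A * β)))) := by
  refine strictAntiOn_of_deriv_neg (convex_Iic _) (by fun_prop) fun r hr => ?_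
  rw [interior_Iic, mem_Iio] at hr
  rw [(hasDerivAt_mul_exp_add_sub A B β r).deriv, mul_mul_exp_eq_exp_sub hA hβ, sub_neg,
    exp_lt_one_iff]
  exact mul_neg_of_pos_of_neg hβ (sub_neg.2 hr)

lemma strictMonoOn_mul_exp_add_sub (hA : 0 < A) (hβ : 0 < β) (B : ℝ) :
    StrictMonoOn (fun r => A * exp (β * r) + B - r) (Ici (1 / β * log (1 / (A * β)))) := by
  refine strictMonoOn_of_deriv_pos (convex_Ici _) (by fun_prop) fun r hr => ?_
  rw [interior_Ici, mem_Ioi] at hr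
  rw [(hasDerivAt_mul_exp_add_sub A B β r).deriv, mul_mul_exp_eq_exp_sub hA hβ, sub_pos,
    one_lt_exp_iff]
  exact mul_pos hβ (sub_pos.2 hr)

lemma tendsto_mul_exp_add_sub_atTop (hA : 0 < A) (hβ : 0 < β) (B : ℝ) :
    Tendsto (fun r => A * exp (β * r) + B - r) atTop atTop := by
  have hlin : ∀ᶠ r in atTop, r ≤ A / 2 * exp (β * r) := by
    filter_upwards [(isLittleO_pow_exp_pos_mul_atTop 1 hβ).bound (half_pos hA)] with r hr
    rw [pow_one, norm_eq_abs, norm_of_nonneg (exp_pos _).le] at hr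
    exact (le_abs_self r).trans hr
  refine tendsto_atTop_mono' atTop (hlin.mono fun r hr => ?_)
    (tendsto_atTop_add_const_right atTop B
      (((tendsto_exp_atTop.comp (tendsto_id.const_mul_atTop hβ)).const_mul_atTop
        (half_pos hA))))
  simp only [Function.comp_apply, id]
  linarith

theorem exists_two_fixedPoints_mul_exp_add (hA : 0 < A) (hβ : 0 < β) {B : ℝ} (hB : 0 ≤ B)
    (hcond : B + 1 / β < 1 / β * log (1 / (A * β))) :
    ∃ R₀ R₁ : ℝ, 0 < R₀ ∧ R₀ < R₁ ∧
      R₀ = A * exp (β * R₀) + B ∧ R₁ = A * exp (β * R₁) + B ∧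
      (∀ r : ℝ, 0 ≤ r → r = A * exp (β * r) + B → r = R₀ ∨ r = R₁) ∧
      R₀ < 1 / β * log (1 / (A * β)) ∧ 1 / β * log (1 / (A * β)) < R₁ := by
  set g : ℝ → ℝ := fun r => A * exp (β * r) + B - r with hg
  set rs := 1 / β * log (1 / (A * β))
  have hg_cont : Continuous g := by fun_prop
  have hg_rs : g rs < 0 := by
    have := mul_mul_exp_eq_exp_sub hA hβ rs
    rw [sub_self, mul_zero, exp_zero] at this
    have hexp : A * exp (β * rs) = 1 / β := by field_simp; linarith
    simp only [hg, hexp]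
    linarith
  have hg_zero : 0 < g 0 := by
    simp only [hg, mul_zero, exp_zero, mul_one, sub_zero]
    linarith
  have hrs : 0 < rs := by linarith [one_div_pos.2 hβ]
  obtain ⟨M, hgM, hM⟩ := ((tendsto_mul_exp_add_sub_atTop hA hβ B).eventually_gt_atTop 0).and
    (eventually_gt_atTop rs) |>.exists
  obtain ⟨R₀, ⟨hR₀, hR₀rs⟩, hgR₀⟩ :=
    intermediate_value_Ioo' hrs.le hg_cont.continuousOn ⟨hg_rs, hg_zero⟩
  obtain ⟨R₁, ⟨hrsR₁, -⟩, hgR₁⟩ :=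
    intermediate_value_Ioo hM.le hg_cont.continuousOn ⟨hg_rs, hgM⟩
  have hroot : ∀ r, g r = 0 ↔ r = A * exp (β * r) + B := fun r => by
    simp only [hg]; constructor <;> intro h <;> linarith
  refine ⟨R₀, R₁, hR₀, hR₀rs.trans hrsR₁, (hroot R₀).1 hgR₀, (hroot R₁).1 hgR₁,
    fun r _ hr => ?_, hR₀rs, hrsR₁⟩
  rcases le_total r rs with hr_rs | hrs_r
  · exact .inl <| strictAntiOn_mul_exp_add_sub hA hβ B |>.injOn hr_rs hR₀rs.le <|
      show g r = g R₀ by rw [(hroot r).2 hr, hgR₀]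
  · exact .inr <| strictMonoOn_mul_exp_add_sub hA hβ B |>.injOn hrs_r hrsR₁.le <|
      show g r = g R₁ by rw [(hroot r).2 hr, hgR₁]

end ExpFixedPoint

lemma supSeg_nonneg (f : ℝ → ℂ) : 0 ≤ supSeg f :=
  Real.iSup_nonneg fun _ => norm_nonneg _

lemma supSeg_pos {f : ℝ → ℂ} (hf : ContinuousOn f (Icc (-1) 1))
    (hf0 : ∃ t ∈ Icc (-1 : ℝ) 1, f t ≠ 0) : 0 < supSeg f := by
  obtain ⟨t, ht, hft⟩ := hf0
  have hbdd : BddAbove (range fun s : Icc (-1 : ℝ) 1 => ‖f s.1‖) := by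
    simpa [image_eq_range] using (isCompact_Icc.image_of_continuousOn hf.norm).bddAbove
  exact (norm_pos_iff.2 hft).trans_le (le_ciSup hbdd ⟨t, ht⟩)

lemma log_div_exp_mul {x : ℝ} (hx : 0 < x) : log (1 / (exp 1 * x)) = log (1 / x) - 1 := by
  rw [show 1 / (exp 1 * x) = 1 / x / exp 1 by ring, log_div (by positivity) (exp_pos 1).ne',
    log_exp]

theorem stmt_1_general (α α₀ β₀ : ℝ) (lam : ℂ) (a b : ℝ → ℂ)
    (hα : α ∈ Set.Ioo (0:ℝ) 1) (hα₀ : 0 < α₀) (hβ₀ : 0 < β₀)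
    (ha : ContinuousOn a (Set.Icc (-1:ℝ) 1))
    (ha0 : ∃ t ∈ Set.Icc (-1:ℝ) 1, a t ≠ 0)
    (hcond : 2 ^ α / (α * Real.Gamma α) * supSeg b + ‖lam‖ <
      (1 / β₀) * Real.log (α * Real.Gamma α /
        (Real.exp 1 * α₀ * β₀ * 2 ^ α * supSeg a))) :
    ∃ R₀ R₁ : ℝ, 0 < R₀ ∧ R₀ < R₁ ∧
      R₀ = α₀ * 2 ^ α / (α * Real.Gamma α) * supSeg a * Real.exp (β₀ * R₀) +
            2 ^ α / (α * Real.Gamma α) * supSeg b + ‖lam‖ ∧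
      R₁ = α₀ * 2 ^ α / (α * Real.Gamma α) * supSeg a * Real.exp (β₀ * R₁) +
            2 ^ α / (α * Real.Gamma α) * supSeg b + ‖lam‖ ∧
      (∀ r : ℝ, 0 ≤ r →
        r = α₀ * 2 ^ α / (α * Real.Gamma α) * supSeg a * Real.exp (β₀ * r) +
              2 ^ α / (α * Real.Gamma α) * supSeg b + ‖lam‖ →
        r = R₀ ∨ r = R₁) ∧
      R₀ < (1 / β₀) * Real.log (α * Real.Gamma α / (α₀ * β₀ * 2 ^ α * supSeg a)) ∧
      (1 / β₀) * Real.log (α * Real.Gamma α / (α₀ * β₀ * 2 ^ α * supSeg a)) < R₁ := by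
  have hαΓ : 0 < α * Gamma α := mul_pos hα.1 (Gamma_pos_of_pos hα.1)
  have ha_pos := supSeg_pos ha ha0
  set A := α₀ * 2 ^ α / (α * Gamma α) * supSeg a with hA_def
  set B := 2 ^ α / (α * Gamma α) * supSeg b + ‖lam‖ with hB_def
  have hA : 0 < A := by positivity
  have hB : 0 ≤ B := add_nonneg (mul_nonneg (by positivity) (supSeg_nonneg b)) (norm_nonneg _)
  have hcrit : α * Gamma α / (α₀ * β₀ * 2 ^ α * supSeg a) = 1 / (A * β₀) := by
    rw [hA_def]; field_simp
  have hcond' : B + 1 / β₀ < 1 / β₀ * log (1 / (A * β₀)) := by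
    rwa [show α * Gamma α / (exp 1 * α₀ * β₀ * 2 ^ α * supSeg a) = 1 / (exp 1 * (A * β₀)) by
      rw [hA_def]; field_simp, log_div_exp_mul (by positivity), mul_sub, mul_one, lt_sub_iff_add_lt] at hcond
  obtain ⟨R₀, R₁, hR₀, hR₀R₁, hfix₀, hfix₁, hunique, hR₀crit, hcritR₁⟩ :=
    exists_two_fixedPoints_mul_exp_add hA hβ₀ hB hcond'
  simp only [hcrit, add_assoc, ← hB_def]
  exact ⟨R₀, R₁, hR₀, hR₀R₁, hfix₀, hfix₁, hunique, hR₀crit, hcritR₁⟩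

theorem stmt_1 (α α₀ β₀ : ℝ) (lam : ℂ) (a b : ℝ → ℂ)
    (hα : α ∈ Set.Ioo (0:ℝ) 1) (hα₀ : 0 < α₀) (hβ₀ : 0 < β₀)
    (ha : ContinuousOn a (Set.Icc (-1:ℝ) 1)) (hb : ContinuousOn b (Set.Icc (-1:ℝ) 1))
    (ha0 : ∃ t ∈ Set.Icc (-1:ℝ) 1, a t ≠ 0)
    (hcond : 2 ^ α / (α * Real.Gamma α) * supSeg b + ‖lam‖ <
      (1 / β₀) * Real.log (α * Real.Gamma α /
        (Real.exp 1 * α₀ * β₀ * 2 ^ α * supSeg a))) :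
    ∃ R₀ R₁ : ℝ, 0 < R₀ ∧ R₀ < R₁ ∧
      R₀ = α₀ * 2 ^ α / (α * Real.Gamma α) * supSeg a * Real.exp (β₀ * R₀) +
            2 ^ α / (α * Real.Gamma α) * supSeg b + ‖lam‖ ∧
      R₁ = α₀ * 2 ^ α / (α * Real.Gamma α) * supSeg a * Real.exp (β₀ * R₁) +
            2 ^ α / (α * Real.Gamma α) * supSeg b + ‖lam‖ ∧
      (∀ r : ℝ, 0 ≤ r →
        r = α₀ * 2 ^ α / (α * Real.Gamma α) * supSeg a * Real.exp (β₀ * r) +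
              2 ^ α / (α * Real.Gamma α) * supSeg b + ‖lam‖ →
        r = R₀ ∨ r = R₁) ∧
      R₀ < (1 / β₀) * Real.log (α * Real.Gamma α / (α₀ * β₀ * 2 ^ α * supSeg a)) ∧
      (1 / β₀) * Real.log (α * Real.Gamma α / (α₀ * β₀ * 2 ^ α * supSeg a)) < R₁ :=
  stmt_1_general α α₀ β₀ lam a b hα hα₀ hβ₀ ha ha0 hcond
end

section
/- Let [q₁,q₂] ⊂ ℝ be a nontrivial compact interval, l > 0, and let φ satisfy property S(l) on [q₁,q₂] with threshold τ_φ ∈ (0,π). Then: (1) φ([q₁,q₂]) ⊂ [q₁,q₂]; and (2) for every D ∈ (0,τ_φ) there exists E ∈ (0,D) such that φ([q₁,q₂]^{l,E,p+1}) ⊂ [q₁,q₂]^{l,E,p} for every positive integer p. -/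
/-!
A point lying in the sectors `[q₁,q₂]^a` for all `a > 0` has argument `0` seen from `q₁` and
distance at most `q₂ - q₁` from it, so it lies on `[q₁,q₂]`. Since the radii `τ n^{-1/l}` tend
to `0`, property S(l) puts `φ t` into all these sectors for `t ∈ (q₁,q₂]`, and continuity of `φ`
on `[q₁,q₂]` handles `t = q₁`. For the second part, `(k n)^{-1/l} = k^{-1/l} n^{-1/l}` identifies
the sectors of radius `E = D k^{-1/l}` at index `p` with those of radius `D` at index `k p`;
with `k = N + 2` all indices `k p` with `p ≥ 1` are at least `N`, and `E < D`.
-/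

/-- The sector `[q₁,q₂]^{φ,r} = {q₁ + s·e^{iθ} : 0 < s < q₂ − q₁ + r, −φ < θ < φ}`. -/
def sectorAng (q₁ q₂ φ r : ℝ) : Set ℂ :=
  {z : ℂ | ∃ s θ : ℝ, 0 < s ∧ s < q₂ - q₁ + r ∧ -φ < θ ∧ θ < φ ∧
    z = (q₁ : ℂ) + (s : ℂ) * Complex.exp (θ * Complex.I)}

/-- `[q₁,q₂]^r := [q₁,q₂]^{r,r}`. -/
def sectorR (q₁ q₂ r : ℝ) : Set ℂ := sectorAng q₁ q₂ r r

/-- `[q₁,q₂]^{l,r,n} := [q₁,q₂]^{r·n^{−1/l}}`. -/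
noncomputable def sectorN (q₁ q₂ l r : ℝ) (n : ℕ) : Set ℂ :=
  sectorR q₁ q₂ (r * (n : ℝ) ^ (-(1 / l)))

/-- The real segment `[q₁,q₂]` viewed as a subset of `ℂ`. -/
def realSeg (q₁ q₂ : ℝ) : Set ℂ := (fun t : ℝ => (t : ℂ)) '' Set.Icc q₁ q₂

open Set Filter Topology Complex
open scoped Real

section Sectors

variable {q₁ q₂ : ℝ}

lemma sectorAng_mono {φ φ' r r' : ℝ} (hφ : φ ≤ φ') (hr : r ≤ r') :
    sectorAng q₁ q₂ φ r ⊆ sectorAng q₁ q₂ φ' r' := by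
  rintro z ⟨s, θ, hs, hsr, hθl, hθr, rfl⟩
  exact ⟨s, θ, hs, by linarith, by linarith, by linarith, rfl⟩

lemma sectorR_mono {a b : ℝ} (hab : a ≤ b) : sectorR q₁ q₂ a ⊆ sectorR q₁ q₂ b :=
  sectorAng_mono hab hab

lemma sectorN_antitone {l D : ℝ} (hl : 0 ≤ l) (hD : 0 ≤ D) {m n : ℕ} (hm : 0 < m)
    (hmn : m ≤ n) : sectorN q₁ q₂ l D n ⊆ sectorN q₁ q₂ l D m := by
  refine sectorR_mono (mul_le_mul_of_nonneg_left ?_ hD)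
  exact Real.rpow_le_rpow_of_nonpos (by exact_mod_cast hm) (by exact_mod_cast hmn)
    (neg_nonpos.2 (by positivity))

lemma sectorN_mul_rpow (l D : ℝ) (k m : ℕ) :
    sectorN q₁ q₂ l (D * (k : ℝ) ^ (-(1 / l))) m = sectorN q₁ q₂ l D (k * m) := by
  rw [sectorN, sectorN, Nat.cast_mul, Real.mul_rpow (Nat.cast_nonneg k) (Nat.cast_nonneg m),
    mul_assoc]

lemma ofReal_mem_sectorR {t a : ℝ} (ht : t ∈ Ioc q₁ q₂) (ha : 0 < a) :
    (t : ℂ) ∈ sectorR q₁ q₂ a :=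
  ⟨t - q₁, 0, by linarith [ht.1], by linarith [ht.2], by linarith, ha, by simp⟩

lemma norm_sub_lt_and_abs_arg_sub_lt {φ r : ℝ} {z : ℂ} (hφ : φ ≤ π)
    (hz : z ∈ sectorAng q₁ q₂ φ r) : ‖z - q₁‖ < q₂ - q₁ + r ∧ |arg (z - q₁)| < φ := by
  obtain ⟨s, θ, hs, hsr, hθl, hθr, rfl⟩ := hz
  rw [add_sub_cancel_left, norm_mul, norm_exp_ofReal_mul_I, norm_real,
    Real.norm_of_nonneg hs.le, mul_one, exp_mul_I,
    arg_mul_cos_add_sin_mul_I hs ⟨by linarith, by linarith⟩]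
  exact ⟨hsr, abs_lt.2 ⟨hθl, hθr⟩⟩

lemma mem_realSeg_of_forall_mem_sectorR {z : ℂ} (hz : ∀ a > 0, z ∈ sectorR q₁ q₂ a) :
    z ∈ realSeg q₁ q₂ := by
  have hsmall : ∀ a > 0, ‖z - q₁‖ < q₂ - q₁ + a ∧ |arg (z - q₁)| < a := fun a ha => by
    have h := norm_sub_lt_and_abs_arg_sub_lt (min_le_right a π) (hz _ (lt_min ha Real.pi_pos))
    exact ⟨h.1.trans_le (by linarith [min_le_left a π]), h.2.trans_le (min_le_left a π)⟩
  have hbound : ‖z - q₁‖ ≤ q₂ - q₁ :=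
    le_of_forall_pos_lt_add fun a ha => (hsmall a ha).1
  have harg : arg (z - q₁) = 0 :=
    abs_nonpos_iff.1 (le_of_forall_pos_lt_add fun a ha => by simpa using (hsmall a ha).2)
  obtain ⟨hre, him⟩ := arg_eq_zero_iff.1 harg
  refine ⟨q₁ + (z - q₁).re, ⟨by linarith, by linarith [re_le_norm (z - q₁)]⟩, ?_⟩
  exact Complex.ext (by simp) (by simpa using him.symm)

lemma exists_sectorN_subset_sectorR {l : ℝ} (hl : 0 < l) (D : ℝ) (N : ℕ) {a : ℝ} (ha : 0 < a) :
    ∃ n ≥ N, sectorN q₁ q₂ l D n ⊆ sectorR q₁ q₂ a := by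
  have hradius : Tendsto (fun n : ℕ => D * (n : ℝ) ^ (-(1 / l))) atTop (𝓝 0) := by
    simpa using ((tendsto_rpow_neg_atTop (one_div_pos.2 hl)).comp
      tendsto_natCast_atTop_atTop).const_mul D
  obtain ⟨n, hsmall, hn⟩ :=
    ((hradius.eventually (ge_mem_nhds ha)).and (eventually_ge_atTop N)).exists
  exact ⟨n, hn, sectorR_mono hsmall⟩

end Sectors

section Invariance

variable {q₁ q₂ l D : ℝ} {φ : ℂ → ℂ} {N : ℕ}

lemma apply_ofReal_mem_realSeg (hl : 0 < l) (hD : 0 < D)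
    (hN : ∀ n : ℕ, N ≤ n → φ '' sectorN q₁ q₂ l D (n + 1) ⊆ sectorN q₁ q₂ l D n)
    {t : ℝ} (ht : t ∈ Ioc q₁ q₂) : φ t ∈ realSeg q₁ q₂ := by
  refine mem_realSeg_of_forall_mem_sectorR fun a ha => ?_
  obtain ⟨n, hn, hsub⟩ := exists_sectorN_subset_sectorR hl D N ha
  exact hsub (hN n hn ⟨t, ofReal_mem_sectorR ht (by positivity), rfl⟩)

lemma image_realSeg_subset (hq : q₁ < q₂) (hl : 0 < l) (hD : 0 < D)
    (hφ : ContinuousOn (fun t : ℝ => φ t) (Icc q₁ q₂))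
    (hN : ∀ n : ℕ, N ≤ n → φ '' sectorN q₁ q₂ l D (n + 1) ⊆ sectorN q₁ q₂ l D n) :
    φ '' realSeg q₁ q₂ ⊆ realSeg q₁ q₂ := by
  rw [← closure_Ioc hq.ne] at hφ
  calc φ '' realSeg q₁ q₂ = (fun t : ℝ => φ t) '' closure (Ioc q₁ q₂) := by
        rw [closure_Ioc hq.ne, realSeg, image_image]
    _ ⊆ closure ((fun t : ℝ => φ t) '' Ioc q₁ q₂) := hφ.image_closure
    _ ⊆ realSeg q₁ q₂ :=
        closure_minimal (image_subset_iff.2 fun t ht => apply_ofReal_mem_realSeg hl hD hN ht)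
          (isCompact_Icc.image continuous_ofReal).isClosed

lemma exists_image_sectorN_subset_of_one_le (hl : 0 < l) (hD : 0 < D)
    (hN : ∀ n : ℕ, N ≤ n → φ '' sectorN q₁ q₂ l D (n + 1) ⊆ sectorN q₁ q₂ l D n) :
    ∃ E ∈ Ioo 0 D, ∀ p : ℕ, 1 ≤ p → φ '' sectorN q₁ q₂ l E (p + 1) ⊆ sectorN q₁ q₂ l E p := by
  set k := N + 2
  have hk : (1 : ℝ) < k := by norm_cast; omega
  refine ⟨D * (k : ℝ) ^ (-(1 / l)), ⟨by positivity, ?_⟩, fun p hp => ?_⟩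
  · exact mul_lt_of_lt_one_right hD
      (Real.rpow_lt_one_of_one_lt_of_neg hk (neg_neg_of_pos (one_div_pos.2 hl)))
  rw [sectorN_mul_rpow, sectorN_mul_rpow]
  calc φ '' sectorN q₁ q₂ l D (k * (p + 1))
      ⊆ φ '' sectorN q₁ q₂ l D (k * p + 1) :=
        image_mono (sectorN_antitone hl.le hD.le (Nat.succ_pos _) (by rw [mul_add_one]; omega))
    _ ⊆ sectorN q₁ q₂ l D (k * p) := hN _ ((N.le_add_right 2).trans (Nat.le_mul_of_pos_right k hp))

end Invariance

theorem stmt_6_general (q₁ q₂ l τ : ℝ) (φ : ℂ → ℂ)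
    (hq : q₁ < q₂) (hl : 0 < l)
    (hφC1 : ContDiffOn ℝ 1 (fun t : ℝ => φ t) (Set.Icc q₁ q₂))
    (hτ : τ ∈ Set.Ioo (0:ℝ) Real.pi)
    (hS : ∀ D ∈ Set.Ioc (0:ℝ) τ, ∃ N : ℕ, 0 < N ∧
      ∀ n : ℕ, N ≤ n → φ '' sectorN q₁ q₂ l D (n + 1) ⊆ sectorN q₁ q₂ l D n) :
    φ '' realSeg q₁ q₂ ⊆ realSeg q₁ q₂ ∧
      ∀ D ∈ Set.Ioo (0:ℝ) τ, ∃ E ∈ Set.Ioo (0:ℝ) D,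
        ∀ p : ℕ, 1 ≤ p → φ '' sectorN q₁ q₂ l E (p + 1) ⊆ sectorN q₁ q₂ l E p := by
  obtain ⟨N, -, hN⟩ := hS τ ⟨hτ.1, le_rfl⟩
  refine ⟨image_realSeg_subset hq hl hτ.1 hφC1.continuousOn hN, fun D hD => ?_⟩
  obtain ⟨M, -, hM⟩ := hS D ⟨hD.1, hD.2.le⟩
  exact exists_image_sectorN_subset_of_one_le hl hD.1 hM

theorem stmt_6 (q₁ q₂ l r τ : ℝ) (φ : ℂ → ℂ)
    (hq : q₁ < q₂) (hl : 0 < l) (hr : r ∈ Set.Ioo (0:ℝ) Real.pi)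
    (hφhol : DifferentiableOn ℂ φ (sectorR q₁ q₂ r))
    (hφC1 : ContDiffOn ℝ 1 (fun t : ℝ => φ t) (Set.Icc q₁ q₂))
    (hτ : τ ∈ Set.Ioo (0:ℝ) Real.pi)
    (hS : ∀ D ∈ Set.Ioc (0:ℝ) τ, ∃ N : ℕ, 0 < N ∧
      ∀ n : ℕ, N ≤ n → φ '' sectorN q₁ q₂ l D (n + 1) ⊆ sectorN q₁ q₂ l D n) :
    φ '' realSeg q₁ q₂ ⊆ realSeg q₁ q₂ ∧
      ∀ D ∈ Set.Ioo (0:ℝ) τ, ∃ E ∈ Set.Ioo (0:ℝ) D,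
        ∀ p : ℕ, 1 ≤ p → φ '' sectorN q₁ q₂ l E (p + 1) ⊆ sectorN q₁ q₂ l E p :=
  stmt_6_general q₁ q₂ l τ φ hq hl hφC1 hτ hS
end

section
/- Let α ∈ (0,1), k > 0, λ ∈ ℂ, s₂ ∈ (0,1), and R₀ > |λ|. Let a, b be bounded holomorphic functions on [−1,1]^{s₂}, let Φ be entire, and let ψ be holomorphic on [−1,1]^{s₂} with ψ([−1,1]^{k,s₂,n+1}) ⊂ [−1,1]^{k,s₂,n} for every integer n ≥ 1. Let D̄ := {z ∈ ℂ : |z| ≤ R₀} and set Λ := ((2+s₂)^α/(α·Γ(α)))·max( ‖a‖_{∞,[−1,1]^{s₂}}·sup_{dist(z,D̄)≤s₂}|Φ′(z)|, ‖a‖_{∞,[−1,1]^{s₂}}·sup_{dist(z,D̄)≤s₂}|Φ(z)| + ‖b‖_{∞,[−1,1]^{s₂}} ). Define ω₁ ≡ 0 on [−1,1]^{k,s₂,1} and, recursively, ω_{n+1}(z) := ((z+1)^α/Γ(α)) ∫₀¹ (1−s)^{α−1}( a(−1+s(z+1))·Φ(ω_n(ψ(−1+s(z+1)))) + b(−1+s(z+1))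 ) ds + λ for z ∈ [−1,1]^{k,s₂,n+1}, where (z+1)^α is the principal branch. Assume that for every integer n ≥ 1, ω_n is well defined on [−1,1]^{k,s₂,n} with ω_n([−1,1]^{k,s₂,n}) ⊂ {z ∈ ℂ : dist(z, D̄) < s₂·n^{−1/k}}. Then for every integer n ≥ 2, sup_{z∈[−1,1]^{k,s₂,n+1}} |ω_{n+1}(z) − ω_n(z)| ≤ Λ · sup_{z∈[−1,1]^{k,s₂,n}} |ω_n(z) − ω_{n−1}(z)|; consequently, if moreover Λ ∈ (0,1), then sup_{z∈[−1,1]^{k,s₂,n+1}} |ω_{n+1}(z) − ω_n(z)| ≤ Λ^{n−1} · sup_{z∈[−1,1]^{k,s₂,2}} |ω₂(z) − ω₁(z)| for every integer n ≥ 1. -/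
/-!
The iterates are `ω (n+1) = (z+1)^α/Γ(α) ∫₀¹ (1-s)^(α-1) F_n(-1+s(z+1)) ds` with
`F_n = a · Φ ∘ ω n ∘ ψ + b`, a Riemann–Liouville integral based at `-1`. All iterates take values
in the closed `s₂`-neighbourhood of the disc, a ball on which `Φ` is Lipschitz with constant
`sup |Φ'|`, and `ψ` maps each sector into the previous one; hence
`|F_{n} - F_{n-1}| ≤ ‖a‖ · sup |Φ'| · sup |ω n - ω (n-1)|`. Integrating the kernel gives `1/α`
and `|z+1|^α ≤ (2+s₂)^α`, which is the factor `Λ`; iterating gives the geometric bound. The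
integrals split because the iterates are continuous on their sectors (induction on `n` and
dominated convergence).
-/

open Complex Metric MeasureTheory Set Filter

lemma setOf_infDist_closedBall_le {E : Type*} [NormedAddCommGroup E] [NormedSpace ℝ E]
    {R s : ℝ} (hR : 0 ≤ R) (hs : 0 ≤ s) (x : E) :
    {z : E | infDist z (closedBall x R) ≤ s} = closedBall x (s + R) := by
  rw [← cthickening_closedBall hs hR x]
  ext z
  rw [mem_cthickening_iff, mem_ofPred_eq, infDist,
    ← ENNReal.le_ofReal_iff_toReal_le (infEDist_ne_top ⟨x, mem_closedBall_self hR⟩) hs]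

lemma bddAbove_norm_mul_add {X R : Type*} [NonUnitalSeminormedRing R] {U : Set X}
    {f g h : X → R} (hf : BddAbove ((‖f ·‖) '' U)) (hg : BddAbove ((‖g ·‖) '' U))
    (hh : BddAbove ((‖h ·‖) '' U)) : BddAbove ((fun x => ‖f x * g x + h x‖) '' U) := by
  obtain ⟨A, hA⟩ := hf
  obtain ⟨P, hP⟩ := hg
  obtain ⟨B, hB⟩ := hh
  refine ⟨A * P + B, ?_⟩
  rintro _ ⟨x, hx, rfl⟩
  have hfx : ‖f x‖ ≤ A := hA (mem_image_of_mem _ hx)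
  calc ‖f x * g x + h x‖ ≤ ‖f x‖ * ‖g x‖ + ‖h x‖ :=
        (norm_add_le _ _).trans (add_le_add_left (norm_mul_le _ _) _)
    _ ≤ A * P + B :=
        add_le_add (mul_le_mul hfx (hP (mem_image_of_mem _ hx)) (norm_nonneg _)
          ((norm_nonneg _).trans hfx)) (hB (mem_image_of_mem _ hx))

lemma bddAbove_norm_comp_of_mapsTo_closedBall {X E F : Type*} [PseudoMetricSpace E]
    [ProperSpace E] [SeminormedAddGroup F] {Φ : E → F} (hΦ : Continuous Φ) {g : X → E}
    {U : Set X} {c : E} {ρ : ℝ} (hg : MapsTo g U (closedBall c ρ)) :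
    BddAbove ((fun x => ‖Φ (g x)‖) '' U) :=
  ((isCompact_closedBall c ρ).image hΦ.norm).bddAbove.mono <| by
    rintro _ ⟨x, hx, rfl⟩
    exact mem_image_of_mem _ (hg hx)

lemma norm_mul_add_sub_mul_add_le {Φ : ℂ → ℂ} (hΦ : Differentiable ℂ Φ) {c : ℂ} {ρ L : ℝ}
    (hL : ∀ x ∈ closedBall c ρ, ‖deriv Φ x‖ ≤ L) {u x y w : ℂ} {A M : ℝ} (hu : ‖u‖ ≤ A)
    (hx : x ∈ closedBall c ρ) (hy : y ∈ closedBall c ρ) (hxy : ‖x - y‖ ≤ M) :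
    ‖(u * Φ x + w) - (u * Φ y + w)‖ ≤ A * L * M := by
  have hLip := (convex_closedBall c ρ).norm_image_sub_le_of_norm_deriv_le
    (fun z _ => hΦ z) hL hy hx
  rw [add_sub_add_right_eq_sub, ← mul_sub, norm_mul, mul_assoc]
  exact mul_le_mul hu (hLip.trans (mul_le_mul_of_nonneg_left hxy
    ((norm_nonneg _).trans (hL _ hx)))) (norm_nonneg _) ((norm_nonneg _).trans hu)

lemma le_pow_mul_of_succ_le_mul {d : ℕ → ℝ} {c : ℝ} (hc : 0 ≤ c)
    (h : ∀ n, 1 ≤ n → d (n + 1) ≤ c * d n) : ∀ n, 1 ≤ n → d n ≤ c ^ (n - 1) * d 1 := by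
  intro n hn
  induction n, hn using Nat.le_induction with
  | base => simp
  | succ n hn ih =>
    calc d (n + 1) ≤ c * d n := h n hn
      _ ≤ c * (c ^ (n - 1) * d 1) := mul_le_mul_of_nonneg_left ih hc
      _ = c ^ (n + 1 - 1) * d 1 := by
        rw [← mul_assoc, ← pow_succ', Nat.sub_add_cancel hn, Nat.add_sub_cancel]

section Sector

variable {r : ℝ} {z : ℂ}

lemma sectorR_mono_s8 {r r' : ℝ} (h : r ≤ r') : sectorR (-1) 1 r ⊆ sectorR (-1) 1 r' := by
  rintro z ⟨s, θ, hs0, hs2, hθ1, hθ2, rfl⟩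
  exact ⟨s, θ, hs0, by linarith, by linarith, by linarith, rfl⟩

lemma zero_mem_sectorR (hr : 0 < r) : (0 : ℂ) ∈ sectorR (-1) 1 r :=
  ⟨1, 0, one_pos, by linarith, by linarith, hr, by simp⟩

lemma neg_one_add_mul_mem_sectorR (hz : z ∈ sectorR (-1) 1 r) {t : ℝ} (ht : t ∈ Ioc 0 1) :
    -1 + t * (z + 1) ∈ sectorR (-1) 1 r := by
  obtain ⟨s, θ, hs0, hs2, hθ1, hθ2, rfl⟩ := hz
  refine ⟨t * s, θ, mul_pos ht.1 hs0, ?_, hθ1, hθ2, by push_cast; ring⟩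
  nlinarith [ht.2]

lemma exists_add_one_eq_of_mem_sectorR (hz : z ∈ sectorR (-1) 1 r) :
    ∃ s θ : ℝ, 0 < s ∧ s < 2 + r ∧ |θ| < r ∧ z + 1 = s * exp (θ * I) := by
  obtain ⟨s, θ, hs0, hs2, hθ1, hθ2, rfl⟩ := hz
  exact ⟨s, θ, hs0, by linarith, abs_lt.2 ⟨hθ1, hθ2⟩, by push_cast; ring⟩

lemma norm_add_one_lt_of_mem_sectorR (hz : z ∈ sectorR (-1) 1 r) : ‖z + 1‖ < 2 + r := by
  obtain ⟨s, θ, hs0, hs2, -, h⟩ := exists_add_one_eq_of_mem_sectorR hz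
  rwa [h, norm_mul, norm_exp_ofReal_mul_I, mul_one, Complex.norm_of_nonneg hs0.le]

lemma add_one_mem_slitPlane_of_mem_sectorR (hr : r ≤ Real.pi) (hz : z ∈ sectorR (-1) 1 r) :
    z + 1 ∈ slitPlane := by
  obtain ⟨s, θ, hs0, -, hθ, h⟩ := exists_add_one_eq_of_mem_sectorR hz
  obtain ⟨hθ1, hθ2⟩ := abs_lt.1 hθ
  have harg : arg (z + 1) = θ := by
    rw [h, arg_real_mul _ hs0, exp_mul_I, arg_cos_add_sin_mul_I ⟨by linarith, by linarith⟩]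
  refine mem_slitPlane_iff_arg.2 ⟨harg ▸ by linarith, ?_⟩
  rw [h]
  exact mul_ne_zero (ofReal_ne_zero.2 hs0.ne') (exp_ne_zero _)

variable {k : ℝ} {n : ℕ}

lemma rpow_neg_one_div_le_one (hk : 0 < k) (hn : 1 ≤ n) : (n : ℝ) ^ (-(1 / k)) ≤ 1 :=
  Real.rpow_le_one_of_one_le_of_nonpos (by exact_mod_cast hn) (by simp [hk.le])

lemma sectorN_subset_sectorR (hk : 0 < k) (hr : 0 ≤ r) (hn : 1 ≤ n) :
    sectorN (-1) 1 k r n ⊆ sectorR (-1) 1 r :=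
  sectorR_mono_s8 (mul_le_of_le_one_right hr (rpow_neg_one_div_le_one hk hn))

lemma sectorN_succ_subset (hk : 0 < k) (hr : 0 ≤ r) (hn : 1 ≤ n) :
    sectorN (-1) 1 k r (n + 1) ⊆ sectorN (-1) 1 k r n :=
  sectorR_mono_s8 <| mul_le_mul_of_nonneg_left (Real.rpow_le_rpow_of_nonpos
    (by exact_mod_cast hn) (by push_cast; linarith) (by simp [hk.le])) hr

lemma zero_mem_sectorN (hr : 0 < r) (hn : 1 ≤ n) : (0 : ℂ) ∈ sectorN (-1) 1 k r n :=
  zero_mem_sectorR (mul_pos hr (Real.rpow_pos_of_pos (by exact_mod_cast hn) _))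

end Sector

section FractionalIntegral

variable {α r : ℝ} {z : ℂ}

lemma intervalIntegrable_one_sub_rpow (hα : 0 < α) :
    IntervalIntegrable (fun s : ℝ => (1 - s) ^ (α - 1)) volume 0 1 := by
  simpa using ((intervalIntegral.intervalIntegrable_rpow' (by linarith : -1 < α - 1)
    (a := 0) (b := 1)).comp_sub_left 1).symm

lemma integral_one_sub_rpow (hα : 0 < α) : ∫ s in (0 : ℝ)..1, (1 - s) ^ (α - 1) = α⁻¹ := by
  rw [intervalIntegral.integral_comp_sub_left (fun x : ℝ => x ^ (α - 1)),
    integral_rpow (Or.inl (by linarith))]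
  simp [Real.zero_rpow hα.ne']

lemma norm_kernel_mul_le {s : ℝ} (hs : s ≤ 1) {w : ℂ} {C : ℝ} (hw : ‖w‖ ≤ C) :
    ‖(((1 - s) ^ (α - 1) : ℝ) : ℂ) * w‖ ≤ (1 - s) ^ (α - 1) * C := by
  have hk : 0 ≤ (1 - s) ^ (α - 1) := Real.rpow_nonneg (sub_nonneg.2 hs) _
  rw [norm_mul, Complex.norm_of_nonneg hk]
  exact mul_le_mul_of_nonneg_left hw hk

lemma norm_integral_kernel_mul_le {H : ℝ → ℂ} {M : ℝ} (hα : 0 < α)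
    (hH : ∀ s ∈ Ioc (0 : ℝ) 1, ‖H s‖ ≤ M) :
    ‖∫ s in (0 : ℝ)..1, (((1 - s) ^ (α - 1) : ℝ) : ℂ) * H s‖ ≤ M / α :=
  calc _ ≤ ∫ s in (0 : ℝ)..1, (1 - s) ^ (α - 1) * M :=
        intervalIntegral.norm_integral_le_of_norm_le zero_le_one
          (Eventually.of_forall fun s hs => norm_kernel_mul_le hs.2 (hH s hs))
          ((intervalIntegrable_one_sub_rpow hα).mul_const M)
    _ = M / α := by
        rw [intervalIntegral.integral_mul_const, integral_one_sub_rpow hα, inv_mul_eq_div]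

lemma intervalIntegrable_kernel_mul {F : ℂ → ℂ} (hα : 0 < α)
    (hF : ContinuousOn F (sectorR (-1) 1 r)) (hFb : BddAbove ((‖F ·‖) '' sectorR (-1) 1 r))
    (hz : z ∈ sectorR (-1) 1 r) :
    IntervalIntegrable (fun s : ℝ => (((1 - s) ^ (α - 1) : ℝ) : ℂ) * F (-1 + s * (z + 1)))
      volume 0 1 := by
  obtain ⟨C, hC⟩ := hFb
  have hmaps : MapsTo (fun s : ℝ => -1 + s * (z + 1)) (Ioc 0 1) (sectorR (-1) 1 r) :=
    fun s hs => neg_one_add_mul_mem_sectorR hz hs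
  have hcont : ContinuousOn (fun s : ℝ => (((1 - s) ^ (α - 1) : ℝ) : ℂ) * F (-1 + s * (z + 1)))
      (Ioo 0 1) :=
    (continuous_ofReal.comp_continuousOn ((continuousOn_const.sub continuousOn_id).rpow_const
      fun s hs => Or.inl (sub_ne_zero.2 hs.2.ne'))).mul
      (hF.comp (by fun_prop) (hmaps.mono_left Ioo_subset_Ioc_self))
  rw [intervalIntegrable_iff_integrableOn_Ioo_of_le zero_le_one] at *
  refine Integrable.mono' ((intervalIntegrable_iff_integrableOn_Ioo_of_le zero_le_one).1
    ((intervalIntegrable_one_sub_rpow hα).mul_const C)) (hcont.aestronglyMeasurable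
    measurableSet_Ioo) ((ae_restrict_iff' measurableSet_Ioo).2 (Eventually.of_forall ?_))
  exact fun s hs => norm_kernel_mul_le hs.2.le (hC (mem_image_of_mem _ (hmaps ⟨hs.1, hs.2.le⟩)))

/-- With `t = -1 + s(z+1)`, `(z+1)^α/Γ(α) ∫₀¹ (1-s)^(α-1) F(-1+s(z+1)) ds` is the
Riemann–Liouville integral `1/Γ(α) ∫_{-1}^z (z-t)^(α-1) F(t) dt`. As in the recursion, the
constant `lam` is part of the integrand. -/
noncomputable def fracIntegralOp (α : ℝ) (lam : ℂ) (F : ℂ → ℂ) (z : ℂ) : ℂ :=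
  (z + 1) ^ (α : ℂ) / (Real.Gamma α : ℂ) *
    ∫ s in (0 : ℝ)..1, (((1 - s) ^ (α - 1) : ℝ) : ℂ) * F (-1 + s * (z + 1)) + lam

lemma continuousOn_fracIntegralOp {F : ℂ → ℂ} (hα : 0 < α) (hr : r ≤ Real.pi)
    (hF : ContinuousOn F (sectorR (-1) 1 r)) (hFb : BddAbove ((‖F ·‖) '' sectorR (-1) 1 r))
    (lam : ℂ) : ContinuousOn (fracIntegralOp α lam F) (sectorR (-1) 1 r) := by
  refine ((ContinuousOn.cpow_const (by fun_prop)
    fun z hz => add_one_mem_slitPlane_of_mem_sectorR hr hz).div_const _).mul fun z₀ hz₀ => ?_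
  obtain ⟨C, hC⟩ := hFb
  refine intervalIntegral.continuousWithinAt_of_dominated_interval
    (bound := fun s => (1 - s) ^ (α - 1) * C + ‖lam‖) ?_ ?_
    (((intervalIntegrable_one_sub_rpow hα).mul_const C).add intervalIntegrable_const) ?_
  · filter_upwards [self_mem_nhdsWithin] with z hz
    exact ((intervalIntegrable_kernel_mul hα hF ⟨C, hC⟩ hz).add
      intervalIntegrable_const).def'.aestronglyMeasurable
  · filter_upwards [self_mem_nhdsWithin] with z hz
    refine Eventually.of_forall fun s hs => ?_
    rw [uIoc_of_le zero_le_one] at hs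
    exact (norm_add_le _ _).trans (add_le_add_left (norm_kernel_mul_le hs.2
      (hC (mem_image_of_mem _ (neg_one_add_mul_mem_sectorR hz hs)))) _)
  · refine Eventually.of_forall fun s hs => ?_
    rw [uIoc_of_le zero_le_one] at hs
    have hline : MapsTo (fun z : ℂ => -1 + s * (z + 1)) (sectorR (-1) 1 r) (sectorR (-1) 1 r) :=
      fun z hz => neg_one_add_mul_mem_sectorR hz hs
    exact ((continuousWithinAt_const.mul
      ((hF.comp (by fun_prop) hline) z₀ hz₀)).add continuousWithinAt_const)

lemma norm_fracIntegralOp_sub_le {F G : ℂ → ℂ} {M : ℝ} (hα : 0 < α)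
    (hF : ContinuousOn F (sectorR (-1) 1 r)) (hFb : BddAbove ((‖F ·‖) '' sectorR (-1) 1 r))
    (hG : ContinuousOn G (sectorR (-1) 1 r)) (hGb : BddAbove ((‖G ·‖) '' sectorR (-1) 1 r))
    (hFG : ∀ v ∈ sectorR (-1) 1 r, ‖F v - G v‖ ≤ M) (lam : ℂ) (hz : z ∈ sectorR (-1) 1 r) :
    ‖fracIntegralOp α lam F z - fracIntegralOp α lam G z‖ ≤
      ‖z + 1‖ ^ α / (α * Real.Gamma α) * M := by
  have hsub : fracIntegralOp α lam F z - fracIntegralOp α lam G z =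
      (z + 1) ^ (α : ℂ) / (Real.Gamma α : ℂ) * ∫ s in (0 : ℝ)..1,
        (((1 - s) ^ (α - 1) : ℝ) : ℂ) * (F (-1 + s * (z + 1)) - G (-1 + s * (z + 1))) := by
    rw [fracIntegralOp, fracIntegralOp, ← mul_sub, ← intervalIntegral.integral_sub
      ((intervalIntegrable_kernel_mul hα hF hFb hz).add intervalIntegrable_const)
      ((intervalIntegrable_kernel_mul hα hG hGb hz).add intervalIntegrable_const)]
    simp only [add_sub_add_right_eq_sub, mul_sub]
  have hΓ := Real.Gamma_pos_of_pos hα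
  rw [hsub, norm_mul, norm_div, norm_cpow_real, Complex.norm_of_nonneg hΓ.le]
  calc _ ≤ ‖z + 1‖ ^ α / Real.Gamma α * (M / α) :=
        mul_le_mul_of_nonneg_left (norm_integral_kernel_mul_le hα
          fun s hs => hFG _ (neg_one_add_mul_mem_sectorR hz hs)) (by positivity)
    _ = _ := by field_simp

end FractionalIntegral

section Iteration

variable {α k s₂ ρ : ℝ} {lam : ℂ} {a b Φ ψ : ℂ → ℂ} {ω : ℕ → ℂ → ℂ}

lemma continuousOn_bddAbove_rhs {w : ℂ → ℂ} {U D : Set ℂ} (hU : U ⊆ sectorR (-1) 1 s₂)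
    (ha : ContinuousOn a (sectorR (-1) 1 s₂)) (habdd : BddAbove ((‖a ·‖) '' sectorR (-1) 1 s₂))
    (hb : ContinuousOn b (sectorR (-1) 1 s₂)) (hbbdd : BddAbove ((‖b ·‖) '' sectorR (-1) 1 s₂))
    (hΦ : Continuous Φ) (hψ : ContinuousOn ψ (sectorR (-1) 1 s₂)) (hψUD : MapsTo ψ U D)
    (hw : ContinuousOn w D) (hwρ : MapsTo w D (closedBall 0 ρ)) :
    ContinuousOn (fun v => a v * Φ (w (ψ v)) + b v) U ∧
      BddAbove ((fun v => ‖a v * Φ (w (ψ v)) + b v‖) '' U) :=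
  ⟨((ha.mono hU).mul (hΦ.comp_continuousOn (hw.comp (hψ.mono hU) hψUD))).add (hb.mono hU),
    bddAbove_norm_mul_add (habdd.mono (image_mono hU))
      (bddAbove_norm_comp_of_mapsTo_closedBall hΦ (hwρ.comp hψUD)) (hbbdd.mono (image_mono hU))⟩

theorem continuousOn_iterate (hα : 0 < α) (hk : 0 < k) (hs₂ : 0 ≤ s₂) (hs₂π : s₂ ≤ Real.pi)
    (ha : ContinuousOn a (sectorR (-1) 1 s₂)) (habdd : BddAbove ((‖a ·‖) '' sectorR (-1) 1 s₂))
    (hb : ContinuousOn b (sectorR (-1) 1 s₂)) (hbbdd : BddAbove ((‖b ·‖) '' sectorR (-1) 1 s₂))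
    (hΦ : Continuous Φ) (hψ : ContinuousOn ψ (sectorR (-1) 1 s₂))
    (hψsec : ∀ n : ℕ, 1 ≤ n → ψ '' sectorN (-1) 1 k s₂ (n + 1) ⊆ sectorN (-1) 1 k s₂ n)
    (hω1 : ∀ z : ℂ, ω 1 z = 0)
    (hrec : ∀ n : ℕ, 1 ≤ n → ∀ z : ℂ,
      ω (n + 1) z = fracIntegralOp α lam (fun v => a v * Φ (ω n (ψ v)) + b v) z)
    (hωρ : ∀ n : ℕ, 1 ≤ n → MapsTo (ω n) (sectorN (-1) 1 k s₂ n) (closedBall 0 ρ)) :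
    ∀ n : ℕ, 1 ≤ n → ContinuousOn (ω n) (sectorN (-1) 1 k s₂ n) := by
  intro n hn
  induction n, hn using Nat.le_induction with
  | base => exact continuousOn_const.congr fun z _ => hω1 z
  | succ n hn ih =>
    obtain ⟨hF, hFb⟩ := continuousOn_bddAbove_rhs (sectorN_subset_sectorR hk hs₂ (by omega))
      ha habdd hb hbbdd hΦ hψ (mapsTo_iff_image_subset.2 (hψsec n hn)) ih (hωρ n hn)
    have hr : s₂ * ((n + 1 : ℕ) : ℝ) ^ (-(1 / k)) ≤ Real.pi :=
      (mul_le_of_le_one_right hs₂ (rpow_neg_one_div_le_one hk (by omega))).trans hs₂π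
    exact (continuousOn_fracIntegralOp hα hr hF hFb lam).congr fun z _ => hrec n hn z

theorem iSup_norm_iterate_sub_le (hα : 0 < α) (hk : 0 < k) (hs₂ : 0 < s₂)
    (ha : ContinuousOn a (sectorR (-1) 1 s₂)) (hb : ContinuousOn b (sectorR (-1) 1 s₂))
    (hbbdd : BddAbove ((‖b ·‖) '' sectorR (-1) 1 s₂)) (hΦ : Differentiable ℂ Φ)
    (hψ : ContinuousOn ψ (sectorR (-1) 1 s₂))
    (hψsec : ∀ n : ℕ, 1 ≤ n → ψ '' sectorN (-1) 1 k s₂ (n + 1) ⊆ sectorN (-1) 1 k s₂ n)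
    (hrec : ∀ n : ℕ, 1 ≤ n → ∀ z : ℂ,
      ω (n + 1) z = fracIntegralOp α lam (fun v => a v * Φ (ω n (ψ v)) + b v) z)
    (hωρ : ∀ n : ℕ, 1 ≤ n → MapsTo (ω n) (sectorN (-1) 1 k s₂ n) (closedBall 0 ρ))
    (hcont : ∀ n : ℕ, 1 ≤ n → ContinuousOn (ω n) (sectorN (-1) 1 k s₂ n))
    {A L : ℝ} (hA : ∀ v ∈ sectorR (-1) 1 s₂, ‖a v‖ ≤ A)
    (hL : ∀ x ∈ closedBall (0 : ℂ) ρ, ‖deriv Φ x‖ ≤ L) {n : ℕ} (hn : 2 ≤ n) :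
    (⨆ z : sectorN (-1) 1 k s₂ (n + 1), ‖ω (n + 1) z.1 - ω n z.1‖) ≤
      (2 + s₂) ^ α / (α * Real.Gamma α) * (A * L) *
        ⨆ z : sectorN (-1) 1 k s₂ n, ‖ω n z.1 - ω (n - 1) z.1‖ := by
  obtain ⟨m, rfl⟩ : ∃ m, n = m + 1 := ⟨n - 1, by omega⟩
  have hm : 1 ≤ m := by omega
  have hm1 : 1 ≤ m + 1 := by omega
  rw [Nat.add_sub_cancel]
  set M := ⨆ z : sectorN (-1) 1 k s₂ (m + 1), ‖ω (m + 1) z.1 - ω m z.1‖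
  have habdd : BddAbove ((‖a ·‖) '' sectorR (-1) 1 s₂) := ⟨A, forall_mem_image.2 hA⟩
  have hSsucc := sectorN_succ_subset hk hs₂.le hm
  have hM : ∀ v ∈ sectorN (-1) 1 k s₂ (m + 1), ‖ω (m + 1) v - ω m v‖ ≤ M := by
    refine fun v hv => le_ciSup_set (f := fun v => ‖ω (m + 1) v - ω m v‖)
      ⟨ρ + ρ, forall_mem_image.2 fun u hu => ?_⟩ hv
    exact (norm_sub_le _ _).trans (add_le_add (mem_closedBall_zero_iff.1 (hωρ _ hm1 hu))
      (mem_closedBall_zero_iff.1 (hωρ _ hm (hSsucc hu))))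
  have hψ' : MapsTo ψ (sectorN (-1) 1 k s₂ (m + 1 + 1)) (sectorN (-1) 1 k s₂ (m + 1)) :=
    mapsTo_iff_image_subset.2 (hψsec _ hm1)
  have hU := sectorN_subset_sectorR hk hs₂.le (n := m + 1 + 1) (by omega)
  obtain ⟨hF, hFb⟩ := continuousOn_bddAbove_rhs hU ha habdd hb hbbdd hΦ.continuous hψ hψ'
    (hcont _ hm1) (hωρ _ hm1)
  obtain ⟨hG, hGb⟩ := continuousOn_bddAbove_rhs hU ha habdd hb hbbdd hΦ.continuous hψ
    (hψ'.mono_right hSsucc) (hcont _ hm) (hωρ _ hm)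
  have hFG : ∀ v ∈ sectorN (-1) 1 k s₂ (m + 1 + 1),
      ‖(a v * Φ (ω (m + 1) (ψ v)) + b v) - (a v * Φ (ω m (ψ v)) + b v)‖ ≤ A * L * M :=
    fun v hv => norm_mul_add_sub_mul_add_le hΦ hL (hA v (hU hv)) (hωρ _ hm1 (hψ' hv))
      (hωρ _ hm (hSsucc (hψ' hv))) (hM _ (hψ' hv))
  have : Nonempty (sectorN (-1) 1 k s₂ (m + 1 + 1)) := ⟨⟨0, zero_mem_sectorN hs₂ (by omega)⟩⟩
  refine ciSup_le fun ⟨z, hz⟩ => ?_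
  have hALM : 0 ≤ A * L * M := (norm_nonneg _).trans (hFG z hz)
  calc ‖ω (m + 1 + 1) z - ω (m + 1) z‖
      ≤ ‖z + 1‖ ^ α / (α * Real.Gamma α) * (A * L * M) := by
        rw [hrec _ hm1, hrec _ hm]
        exact norm_fracIntegralOp_sub_le hα hF hFb hG hGb hFG lam hz
    _ ≤ (2 + s₂) ^ α / (α * Real.Gamma α) * (A * L * M) := by
        have hΓ := Real.Gamma_pos_of_pos hα
        gcongr
        exact (norm_add_one_lt_of_mem_sectorR (hU hz)).le
    _ = (2 + s₂) ^ α / (α * Real.Gamma α) * (A * L) * M := by ring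

end Iteration

theorem stmt_8 (α k s₂ R₀ Λ : ℝ) (lam : ℂ) (a b Φ ψ : ℂ → ℂ) (ω : ℕ → ℂ → ℂ)
    (hα : α ∈ Set.Ioo (0:ℝ) 1) (hk : 0 < k) (hs₂ : s₂ ∈ Set.Ioo (0:ℝ) 1)
    (hR₀ : ‖lam‖ < R₀)
    (hahol : DifferentiableOn ℂ a (sectorR (-1) 1 s₂))
    (habdd : BddAbove ((fun z => ‖a z‖) '' sectorR (-1) 1 s₂))
    (hbhol : DifferentiableOn ℂ b (sectorR (-1) 1 s₂))
    (hbbdd : BddAbove ((fun z => ‖b z‖) '' sectorR (-1) 1 s₂))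
    (hΦ : Differentiable ℂ Φ)
    (hψhol : DifferentiableOn ℂ ψ (sectorR (-1) 1 s₂))
    (hψsec : ∀ n : ℕ, 1 ≤ n →
      ψ '' sectorN (-1) 1 k s₂ (n + 1) ⊆ sectorN (-1) 1 k s₂ n)
    (hΛdef : Λ = (2 + s₂) ^ α / (α * Real.Gamma α) *
      max ((⨆ z : sectorR (-1) 1 s₂, ‖a z.1‖) *
            (⨆ z : {z : ℂ | Metric.infDist z (Metric.closedBall (0:ℂ) R₀) ≤ s₂}, ‖deriv Φ z.1‖))
          ((⨆ z : sectorR (-1) 1 s₂, ‖a z.1‖) *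
            (⨆ z : {z : ℂ | Metric.infDist z (Metric.closedBall (0:ℂ) R₀) ≤ s₂}, ‖Φ z.1‖) +
            (⨆ z : sectorR (-1) 1 s₂, ‖b z.1‖)))
    (hω1 : ∀ z : ℂ, ω 1 z = 0)
    (hrec : ∀ n : ℕ, 1 ≤ n → ∀ z : ℂ,
      ω (n + 1) z = (z + 1) ^ (α : ℂ) / (Real.Gamma α : ℂ) *
          ∫ s in (0:ℝ)..1, (((1 - s) ^ (α - 1) : ℝ) : ℂ) *
            (a (-1 + s * (z + 1)) * Φ (ω n (ψ (-1 + s * (z + 1)))) +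
              b (-1 + s * (z + 1))) + lam)
    (hran : ∀ n : ℕ, 1 ≤ n → ∀ z ∈ sectorN (-1) 1 k s₂ n,
      Metric.infDist (ω n z) (Metric.closedBall (0:ℂ) R₀) < s₂ * (n : ℝ) ^ (-(1 / k))) :
    (∀ n : ℕ, 2 ≤ n →
      (⨆ z : sectorN (-1) 1 k s₂ (n + 1), ‖ω (n + 1) z.1 - ω n z.1‖) ≤
        Λ * ⨆ z : sectorN (-1) 1 k s₂ n, ‖ω n z.1 - ω (n - 1) z.1‖) ∧
    (Λ ∈ Set.Ioo (0:ℝ) 1 → ∀ n : ℕ, 1 ≤ n →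
      (⨆ z : sectorN (-1) 1 k s₂ (n + 1), ‖ω (n + 1) z.1 - ω n z.1‖) ≤
        Λ ^ (n - 1) * ⨆ z : sectorN (-1) 1 k s₂ 2, ‖ω 2 z.1 - ω 1 z.1‖) := by
  obtain ⟨hα0, -⟩ := hα
  obtain ⟨hs0, hs1⟩ := hs₂
  have hT := setOf_infDist_closedBall_le ((norm_nonneg lam).trans hR₀.le) hs0.le (0 : ℂ)
  have hωρ : ∀ n : ℕ, 1 ≤ n → MapsTo (ω n) (sectorN (-1) 1 k s₂ n) (closedBall 0 (s₂ + R₀)) :=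
    fun n hn z hz => hT ▸ (hran n hn z hz).le.trans
      (mul_le_of_le_one_right hs0.le (rpow_neg_one_div_le_one hk hn))
  have hcont := continuousOn_iterate hα0 hk hs0.le (by linarith [Real.pi_gt_three])
    hahol.continuousOn habdd hbhol.continuousOn hbbdd hΦ.continuous hψhol.continuousOn hψsec
    hω1 hrec hωρ
  set A := ⨆ z : sectorR (-1) 1 s₂, ‖a z.1‖
  set L := ⨆ z : {z : ℂ | infDist z (closedBall (0 : ℂ) R₀) ≤ s₂}, ‖deriv Φ z.1‖
  have hL : ∀ x ∈ closedBall (0 : ℂ) (s₂ + R₀), ‖deriv Φ x‖ ≤ L := fun x hx =>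
    le_ciSup_set (hT ▸ ((isCompact_closedBall _ _).image
      ((hΦ.contDiff (n := 1)).continuous_deriv le_rfl).norm).bddAbove) (hT ▸ hx)
  have hΛ : (2 + s₂) ^ α / (α * Real.Gamma α) * (A * L) ≤ Λ :=
    hΛdef ▸ mul_le_mul_of_nonneg_left (le_max_left _ _)
      (div_nonneg (by positivity) (mul_nonneg hα0.le (Real.Gamma_pos_of_pos hα0).le))
  have step : ∀ n : ℕ, 2 ≤ n →
      (⨆ z : sectorN (-1) 1 k s₂ (n + 1), ‖ω (n + 1) z.1 - ω n z.1‖) ≤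
        Λ * ⨆ z : sectorN (-1) 1 k s₂ n, ‖ω n z.1 - ω (n - 1) z.1‖ := fun n hn =>
    (iSup_norm_iterate_sub_le hα0 hk hs0 hahol.continuousOn hbhol.continuousOn hbbdd hΦ
      hψhol.continuousOn hψsec hrec hωρ hcont (fun v hv => le_ciSup_set habdd hv) hL hn).trans
      (mul_le_mul_of_nonneg_right hΛ (Real.iSup_nonneg fun _ => norm_nonneg _))
  exact ⟨step, fun hΛ01 => le_pow_mul_of_succ_le_mul (d := fun n =>
    ⨆ z : sectorN (-1) 1 k s₂ (n + 1), ‖ω (n + 1) z.1 - ω n z.1‖) hΛ01.1.le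
    fun n hn => step (n + 1) (by omega)⟩
end

section
/- Let L : ℂ → ℂ be the entire function L(z) := 2·e^{(z−1)/2} − 1. For every l ∈ (0,1], L satisfies property S(l) on [−1,1]; that is, there exists τ ∈ (0,π) such that for every D ∈ (0,τ] there exists a positive integer N such that L([−1,1]^{l,D,n+1}) ⊂ [−1,1]^{l,D,n} for every integer n ≥ N. -/
lemma superadd (x a : ℝ) (hx : 0 ≤ x) (ha : 1 ≤ a) : x ^ a + 1 ≤ (x + 1) ^ a := by
  have h := NNReal.add_rpow_le_rpow_add (Real.toNNReal x) 1 ha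
  have := NNReal.coe_le_coe.2 h
  push_cast [NNReal.coe_rpow, Real.coe_toNNReal _ hx] at this
  simpa using this

lemma key_ineq (a x : ℝ) (ha : 1 ≤ a) (hx : 1 ≤ x) :
    (x + 1) ^ (-(2 * a)) ≤ x ^ (-a) - (x + 1) ^ (-a) := by
  have hx0 : (0:ℝ) < x := by linarith
  have hx1 : (0:ℝ) < x + 1 := by linarith
  set P := x ^ a with hP
  set Q := (x + 1) ^ a with hQ
  have hPpos : 0 < P := Real.rpow_pos_of_pos hx0 a
  have hQpos : 0 < Q := Real.rpow_pos_of_pos hx1 a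
  have h1 : (x + 1 + 1) ^ a ≥ Q + 1 := superadd (x + 1) a (by linarith) ha
  have h2 : Q * Q = ((x + 1) * (x + 1)) ^ a := (Real.mul_rpow hx1.le hx1.le).symm
  have h3 : (x * (x + 2)) ^ a ≤ ((x + 1) * (x + 1)) ^ a := by
    apply Real.rpow_le_rpow (by positivity) (by nlinarith) (by linarith)
  have h4 : (x * (x + 2)) ^ a = P * (x + 2) ^ a := Real.mul_rpow hx0.le (by linarith)
  have hmain : P * (Q + 1) ≤ Q * Q := by
    have h5 : P * (Q + 1) ≤ P * (x + 2) ^ a := by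
      apply mul_le_mul_of_nonneg_left _ hPpos.le
      have : x + 1 + 1 = x + 2 := by ring
      rw [this] at h1; linarith
    calc P * (Q + 1) ≤ P * (x + 2) ^ a := h5
      _ = (x * (x + 2)) ^ a := h4.symm
      _ ≤ ((x + 1) * (x + 1)) ^ a := h3
      _ = Q * Q := h2.symm
  have e1 : (x + 1) ^ (-(2 * a)) = (Q * Q)⁻¹ := by
    rw [show -(2 * a) = -a + -a by ring, Real.rpow_add hx1, Real.rpow_neg hx1.le,
      ← hQ, mul_inv]
  have e2 : x ^ (-a) = P⁻¹ := by rw [Real.rpow_neg hx0.le, hP]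
  have e3 : (x + 1) ^ (-a) = Q⁻¹ := by rw [Real.rpow_neg hx1.le, hQ]
  rw [e1, e2, e3, le_sub_iff_add_le]
  have e4 : (Q * Q)⁻¹ + Q⁻¹ = (1 + Q) / (Q * Q) := by field_simp
  rw [e4, inv_eq_one_div, div_le_div_iff₀ (by positivity) hPpos]
  nlinarith

lemma main_ineq (l D : ℝ) (hl0 : 0 < l) (hl1 : l ≤ 1) (hD0 : 0 < D) (hD1 : D ≤ 1)
    (n : ℕ) (hn : 1 ≤ n) :
    D * ((n:ℝ) + 1) ^ (-(1/l)) + (D * ((n:ℝ) + 1) ^ (-(1/l))) ^ 2 / 2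
      ≤ D * (n:ℝ) ^ (-(1/l)) := by
  set a : ℝ := 1 / l with haa
  have ha : 1 ≤ a := by rw [haa, le_div_iff₀ hl0]; linarith
  have hx : (1:ℝ) ≤ (n:ℝ) := by exact_mod_cast hn
  have hx1 : (0:ℝ) < (n:ℝ) + 1 := by linarith
  have hkey := key_ineq a (n:ℝ) ha hx
  have hsq : (D * ((n:ℝ) + 1) ^ (-a)) ^ 2 = D ^ 2 * ((n:ℝ) + 1) ^ (-(2 * a)) := by
    rw [mul_pow, sq (((n:ℝ) + 1) ^ (-a)), ← Real.rpow_add hx1]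
    ring_nf
  rw [hsq]
  have hp1 : 0 < ((n:ℝ) + 1) ^ (-(2 * a)) := Real.rpow_pos_of_pos hx1 _
  nlinarith [hp1, hkey, sq_nonneg D, mul_le_mul_of_nonneg_right hkey hD0.le]

lemma exp_upper {x : ℝ} (h0 : 0 ≤ x) (h1 : x ≤ 1) : Real.exp x ≤ 1 + x + x ^ 2 := by
  have h := Real.exp_bound' h0 h1 (n := 2) (by norm_num)
  norm_num [Finset.sum_range_succ] at h
  nlinarith [sq_nonneg x]

theorem stmt_9 (L : ℂ → ℂ) (hL : ∀ z : ℂ, L z = 2 * Complex.exp ((z - 1) / 2) - 1)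
    (l : ℝ) (hl : l ∈ Set.Ioc (0:ℝ) 1) :
    ∃ τ ∈ Set.Ioo (0:ℝ) Real.pi, ∀ D ∈ Set.Ioc (0:ℝ) τ, ∃ N : ℕ, 0 < N ∧
      ∀ n : ℕ, N ≤ n → L '' sectorN (-1) 1 l D (n + 1) ⊆ sectorN (-1) 1 l D n := by
  obtain ⟨hl0, hl1⟩ := hl
  refine ⟨1, ⟨one_pos, by linarith [Real.pi_gt_three]⟩, ?_⟩
  rintro D ⟨hD0, hD1⟩
  refine ⟨1, one_pos, ?_⟩
  intro n hn w hw
  simp only [sectorN, sectorR, sectorAng, Set.mem_image, Set.mem_setOf_eq] at hw ⊢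
  obtain ⟨z, ⟨s, θ, hs0, hs2, hθ1, hθ2, rfl⟩, rfl⟩ := hw
  push_cast at hs2 hθ1 hθ2
  set a : ℝ := 1 / l with haa
  set r : ℝ := D * ((n:ℝ) + 1) ^ (-a) with hr
  set r' : ℝ := D * (n:ℝ) ^ (-a) with hr'
  have hn1 : (1:ℝ) ≤ (n:ℝ) := by exact_mod_cast hn
  have hx1 : (0:ℝ) < (n:ℝ) + 1 := by linarith
  have hr0 : 0 < r := by
    apply mul_pos hD0 (Real.rpow_pos_of_pos hx1 _)
  have hr'0 : 0 < r' := by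
    apply mul_pos hD0 (Real.rpow_pos_of_pos (by linarith) _)
  have hrle1 : r ≤ 1 := by
    have h1 : ((n:ℝ) + 1) ^ (-a) ≤ 1 :=
      Real.rpow_le_one_of_one_le_of_nonpos (by linarith)
        (by simp [haa]; positivity)
    calc r ≤ 1 * 1 := by
            rw [hr]
            apply mul_le_mul hD1 h1 (Real.rpow_pos_of_pos hx1 _).le (by norm_num)
      _ = 1 := by norm_num
  have hkey : r + r ^ 2 / 2 ≤ r' := main_ineq l D hl0 hl1 hD0 hD1 n hn
  -- the image point
  refine ⟨2 * Real.exp (s / 2 * Real.cos θ - 1), s / 2 * Real.sin θ, by positivity,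
    ?_, ?_, ?_, ?_⟩
  · -- modulus bound
    have hc : Real.cos θ ≤ 1 := Real.cos_le_one θ
    have harg : s / 2 * Real.cos θ - 1 < r / 2 := by nlinarith
    have h1 : Real.exp (s / 2 * Real.cos θ - 1) < Real.exp (r / 2) :=
      Real.exp_lt_exp.2 harg
    have h2 : Real.exp (r / 2) ≤ 1 + r / 2 + (r / 2) ^ 2 :=
      exp_upper (by positivity) (by linarith)
    nlinarith
  · -- lower angle bound
    have h1 : |Real.sin θ| ≤ |θ| := Real.abs_sin_le_abs
    have h2 : |θ| ≤ r := abs_le.2 ⟨by linarith, hθ2.le⟩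
    have habs : |s / 2 * Real.sin θ| < r' := by
      rw [abs_mul, abs_of_nonneg (by linarith : (0:ℝ) ≤ s / 2)]
      nlinarith [abs_nonneg θ, abs_nonneg (Real.sin θ)]
    linarith [(abs_lt.1 habs).1]
  · -- upper angle bound
    have h1 : |Real.sin θ| ≤ |θ| := Real.abs_sin_le_abs
    have h2 : |θ| ≤ r := abs_le.2 ⟨by linarith, hθ2.le⟩
    have habs : |s / 2 * Real.sin θ| < r' := by
      rw [abs_mul, abs_of_nonneg (by linarith : (0:ℝ) ≤ s / 2)]
      nlinarith [abs_nonneg θ, abs_nonneg (Real.sin θ)]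
    linarith [(abs_lt.1 habs).2]
  · -- the identity L(-1 + s·e^{iθ}) = -1 + s'·e^{iθ'}
    rw [hL]
    have harg : (((-1:ℝ):ℂ) + (s:ℂ) * Complex.exp ((θ:ℝ) * Complex.I) - 1) / 2 =
        ((s / 2 * Real.cos θ - 1 : ℝ) : ℂ) + ((s / 2 * Real.sin θ : ℝ) : ℂ) * Complex.I := by
      rw [Complex.exp_mul_I]
      push_cast
      ring
    rw [harg, Complex.exp_add]
    push_cast [Complex.ofReal_exp]
    ring
end

section
/- Let μ := (3/2)·tan(1) − 1 and let L(z) := 2·e^{(z−1)/2} − 1. Then for every ε ∈ (0,1], L([−1,1]^ε) ⊂ [−1,1]^{ε + μ·ε²}. -/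
theorem stmt_10 (μ : ℝ) (hμ : μ = (3 / 2) * Real.tan 1 - 1) (L : ℂ → ℂ)
    (hL : ∀ z : ℂ, L z = 2 * Complex.exp ((z - 1) / 2) - 1)
    (ε : ℝ) (hε : ε ∈ Set.Ioc (0:ℝ) 1) :
    L '' sectorR (-1) 1 ε ⊆ sectorR (-1) 1 (ε + μ * ε ^ 2) := by
  obtain ⟨hε0, hε1⟩ := hε
  -- μ ≥ 1/2 since tan 1 > 1
  have hpi : (1:ℝ) < Real.pi / 2 := by
    have := Real.pi_gt_three; linarith
  have htan : (1:ℝ) < Real.tan 1 := Real.lt_tan one_pos hpi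
  have hμhalf : (1:ℝ)/2 ≤ μ := by rw [hμ]; linarith
  rintro w ⟨z, ⟨s, θ, hs0, hs, hθ1, hθ2, hz⟩, rfl⟩
  refine ⟨2 * Real.exp (s * Real.cos θ / 2 - 1), s * Real.sin θ / 2,
    by positivity, ?_, ?_, ?_, ?_⟩
  · -- upper bound on radius
    have h1 : s * Real.cos θ ≤ s := by
      nlinarith [Real.cos_le_one θ]
    have h2 : s * Real.cos θ / 2 - 1 < ε / 2 := by linarith
    have h3 : Real.exp (s * Real.cos θ / 2 - 1) < Real.exp (ε / 2) :=
      Real.exp_lt_exp.2 h2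
    have h4 : Real.exp (ε / 2) ≤ 1 + ε / 2 + (ε / 2) ^ 2 / 2 + (ε / 2) ^ 3 * 4 / 18 := by
      have := Real.exp_bound' (x := ε / 2) (by positivity) (by linarith) (n := 3) (by norm_num)
      norm_num [Finset.sum_range_succ, Nat.factorial] at this
      linarith
    nlinarith [sq_nonneg ε, mul_nonneg (sq_nonneg ε) (by linarith : (0:ℝ) ≤ 1 - ε)]
  · -- lower angle bound
    have habs : |s * Real.sin θ / 2| < ε + μ * ε ^ 2 := by
      have hsin : |Real.sin θ| ≤ |θ| := Real.abs_sin_le_abs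
      have hθ : |θ| < ε := abs_lt.2 ⟨hθ1, hθ2⟩
      have h1 : |s * Real.sin θ / 2| ≤ s * |θ| / 2 := by
        rw [abs_div, abs_mul, abs_of_pos hs0]
        have : s * |Real.sin θ| ≤ s * |θ| := by nlinarith
        simp only [abs_two]
        linarith
      have h2 : s * |θ| / 2 < (2 + ε) * ε / 2 := by
        have hθ0 : 0 ≤ |θ| := abs_nonneg θ
        nlinarith
      nlinarith [sq_nonneg ε]
    have := (abs_lt.1 habs)
    linarith [this.1]
  · have habs : |s * Real.sin θ / 2| < ε + μ * ε ^ 2 := by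
      have hsin : |Real.sin θ| ≤ |θ| := Real.abs_sin_le_abs
      have hθ : |θ| < ε := abs_lt.2 ⟨hθ1, hθ2⟩
      have h1 : |s * Real.sin θ / 2| ≤ s * |θ| / 2 := by
        rw [abs_div, abs_mul, abs_of_pos hs0]
        have : s * |Real.sin θ| ≤ s * |θ| := by nlinarith
        simp only [abs_two]
        linarith
      have h2 : s * |θ| / 2 < (2 + ε) * ε / 2 := by
        have hθ0 : 0 ≤ |θ| := abs_nonneg θ
        nlinarith
      nlinarith [sq_nonneg ε]
    exact (abs_lt.1 habs).2
  · -- the identity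
    rw [hL, hz]
    simp only [Complex.ofReal_neg, Complex.ofReal_one]
    have hexp : ((-1:ℂ) + (s:ℂ) * Complex.exp ((θ:ℂ) * Complex.I) - 1) / 2
        = ((s * Real.cos θ / 2 - 1 : ℝ) : ℂ)
          + ((s * Real.sin θ / 2 : ℝ) : ℂ) * Complex.I := by
      rw [Complex.exp_mul_I, ← Complex.ofReal_cos, ← Complex.ofReal_sin]
      push_cast
      ring
    rw [hexp, Complex.exp_add]
    simp only [Complex.ofReal_mul, Complex.ofReal_ofNat, Complex.ofReal_exp]
    ring
end

section
/- For every ε ∈ (0,1], one has 0 < tan(ε) − (ε + ε³/3) ≤ (tan(1) − 4/3)·ε³, with strict inequality on the right for ε ∈ (0,1). -/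
/-!
Let `R x = tan x - (x + x ^ 3 / 3)`. On `(0, π/2)` we have `R' = tan² x - x² > 0`, so `R > 0`.
The ratio `R x / x ^ 3` has derivative `P x / x ^ 4` with `P x = x tan² x - 3 tan x + 3 x`, and
`P' x = 2 tan x · (x (1 + tan² x) - tan x)`, whose second factor is `(2x - sin 2x) / (2 cos² x) > 0`.
Hence `P > 0` (as `P 0 = 0`), the ratio is strictly increasing on `(0, π/2) ∋ 1`, and comparing
`ε` with `1` gives the upper bound `R ε ≤ R 1 · ε³`.
-/

open Real Set

lemma pos_of_hasDerivAt_pos_of_map_zero {f f' : ℝ → ℝ} {b : ℝ}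
    (hf : ∀ x ∈ Ico 0 b, HasDerivAt f (f' x) x) (hf' : ∀ x ∈ Ioo 0 b, 0 < f' x) (h0 : f 0 = 0)
    {x : ℝ} (hx : x ∈ Ioo 0 b) : 0 < f x := by
  have hmono : StrictMonoOn f (Ico 0 b) :=
    strictMonoOn_of_hasDerivWithinAt_pos (convex_Ico 0 b)
      (fun y hy ↦ (hf y hy).continuousAt.continuousWithinAt)
      (fun y hy ↦ (hf y (interior_subset hy)).hasDerivWithinAt)
      (fun y hy ↦ hf' y (by rwa [interior_Ico] at hy))
  simpa [h0] using hmono ⟨le_rfl, hx.1.trans hx.2⟩ (Ioo_subset_Ico_self hx) hx.1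

lemma hasDerivAt_tan_one_add_tan_sq {x : ℝ} (hx : cos x ≠ 0) :
    HasDerivAt tan (1 + tan x ^ 2) x := by
  have h := hasDerivAt_tan hx
  rwa [← inv_one_add_tan_sq hx, one_div, inv_inv] at h

lemma cos_ne_zero_of_mem_Ico {x : ℝ} (hx : x ∈ Ico 0 (π / 2)) : cos x ≠ 0 :=
  (cos_pos_of_mem_Ioo ⟨by linarith [pi_pos, hx.1], hx.2⟩).ne'

noncomputable def tanRemainder (x : ℝ) : ℝ := tan x - (x + x ^ 3 / 3)

lemma hasDerivAt_tanRemainder {x : ℝ} (hx : cos x ≠ 0) :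
    HasDerivAt tanRemainder (tan x ^ 2 - x ^ 2) x := by
  refine ((hasDerivAt_tan_one_add_tan_sq hx).sub
    ((hasDerivAt_id' x).add ((hasDerivAt_pow 3 x).div_const 3))).congr_deriv ?_
  push_cast; ring

lemma tanRemainder_pos {x : ℝ} (hx : x ∈ Ioo 0 (π / 2)) : 0 < tanRemainder x := by
  refine pos_of_hasDerivAt_pos_of_map_zero
    (fun y hy ↦ hasDerivAt_tanRemainder (cos_ne_zero_of_mem_Ico hy)) (fun y hy ↦ ?_)
    (by simp [tanRemainder]) hx
  have := lt_tan hy.1 hy.2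
  nlinarith [hy.1]

lemma mul_one_add_tan_sq_sub_tan_pos {x : ℝ} (hx : x ∈ Ioo 0 (π / 2)) :
    0 < x * (1 + tan x ^ 2) - tan x := by
  have hcos : 0 < cos x := cos_pos_of_mem_Ioo ⟨by linarith [pi_pos, hx.1], hx.2⟩
  have hsin : sin (2 * x) < 2 * x := sin_lt (by linarith [hx.1])
  have key : cos x ^ 2 * (x * (1 + tan x ^ 2) - tan x) = x - sin (2 * x) / 2 := by
    rw [sin_two_mul, tan_eq_sin_div_cos]
    field_simp
    linear_combination x * sin_sq_add_cos_sq x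
  have : 0 < cos x ^ 2 * (x * (1 + tan x ^ 2) - tan x) := by rw [key]; linarith
  exact pos_of_mul_pos_right this (by positivity)

lemma mul_tan_sq_sub_three_mul_tan_add_three_mul_pos {x : ℝ} (hx : x ∈ Ioo 0 (π / 2)) :
    0 < x * tan x ^ 2 - 3 * tan x + 3 * x := by
  refine pos_of_hasDerivAt_pos_of_map_zero (f := fun y ↦ y * tan y ^ 2 - 3 * tan y + 3 * y)
    (f' := fun y ↦ 2 * tan y * (y * (1 + tan y ^ 2) - tan y))
    (fun y hy ↦ ?_) (fun y hy ↦ ?_) (by simp) hx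
  · have hT := hasDerivAt_tan_one_add_tan_sq (cos_ne_zero_of_mem_Ico hy)
    refine ((((hasDerivAt_id' y).mul (hT.pow 2)).sub (hT.const_mul 3)).add
      ((hasDerivAt_id' y).const_mul 3)).congr_deriv ?_
    simp only [Pi.pow_apply]; push_cast; ring
  · have := lt_tan hy.1 hy.2
    exact mul_pos (by linarith [hy.1]) (mul_one_add_tan_sq_sub_tan_pos hy)

lemma strictMonoOn_tanRemainder_div_cube :
    StrictMonoOn (fun x ↦ tanRemainder x / x ^ 3) (Ioo 0 (π / 2)) := by
  have hderiv : ∀ x ∈ Ioo 0 (π / 2), HasDerivAt (fun x ↦ tanRemainder x / x ^ 3)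
      ((x * tan x ^ 2 - 3 * tan x + 3 * x) / x ^ 4) x := fun x hx ↦ by
    have hx0 : x ≠ 0 := hx.1.ne'
    refine ((hasDerivAt_tanRemainder (cos_ne_zero_of_mem_Ico (Ioo_subset_Ico_self hx))).fun_div
      (hasDerivAt_pow 3 x) (pow_ne_zero 3 hx0)).congr_deriv ?_
    simp only [tanRemainder]; field_simp; ring
  refine strictMonoOn_of_hasDerivWithinAt_pos (convex_Ioo 0 (π / 2))
    (fun x hx ↦ (hderiv x hx).continuousAt.continuousWithinAt)
    (fun x hx ↦ (hderiv x (interior_subset hx)).hasDerivWithinAt) (fun x hx ↦ ?_)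
  rw [interior_Ioo] at hx
  exact div_pos (mul_tan_sq_sub_three_mul_tan_add_three_mul_pos hx) (pow_pos hx.1 4)

theorem stmt_13 (ε : ℝ) (hε : ε ∈ Set.Ioc (0:ℝ) 1) :
    0 < Real.tan ε - (ε + ε ^ 3 / 3) ∧
    Real.tan ε - (ε + ε ^ 3 / 3) ≤ (Real.tan 1 - 4 / 3) * ε ^ 3 ∧
    (ε < 1 → Real.tan ε - (ε + ε ^ 3 / 3) < (Real.tan 1 - 4 / 3) * ε ^ 3) := by
  obtain ⟨hε0, hε1⟩ := hε
  have one_lt : (1 : ℝ) < π / 2 := by linarith [pi_gt_three]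
  have hε : ε ∈ Ioo 0 (π / 2) := ⟨hε0, hε1.trans_lt one_lt⟩
  have hR1 : tanRemainder 1 = tan 1 - 4 / 3 := by norm_num [tanRemainder]
  have hstrict : ε < 1 → tanRemainder ε < tanRemainder 1 * ε ^ 3 := fun hlt ↦ by
    have := strictMonoOn_tanRemainder_div_cube hε ⟨one_pos, one_lt⟩ hlt
    dsimp only at this
    rwa [one_pow, div_one, div_lt_iff₀ (by positivity)] at this
  rw [← hR1]
  change 0 < tanRemainder ε ∧ tanRemainder ε ≤ tanRemainder 1 * ε ^ 3 ∧
    (ε < 1 → tanRemainder ε < tanRemainder 1 * ε ^ 3)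
  refine ⟨tanRemainder_pos hε, ?_, hstrict⟩
  rcases hε1.lt_or_eq with hlt | rfl
  · exact (hstrict hlt).le
  · rw [one_pow, mul_one]
end

section
/- Let l ∈ (0,1], μ > 0 and A ∈ (0, 1/(μ·l)). Then there exists a positive integer N such that for every integer n ≥ N, A·(n+1)^{−1/l} + μ·A²·(n+1)^{−2/l} ≤ A·n^{−1/l}. -/
theorem stmt_16 (l μ A : ℝ) (hl : l ∈ Set.Ioc (0:ℝ) 1) (hμ : 0 < μ)
    (hA : A ∈ Set.Ioo (0:ℝ) (1 / (μ * l))) :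
    ∃ N : ℕ, 0 < N ∧ ∀ n : ℕ, N ≤ n →
      A * ((n : ℝ) + 1) ^ (-(1 / l)) + μ * A ^ 2 * ((n : ℝ) + 1) ^ (-(2 / l)) ≤
        A * (n : ℝ) ^ (-(1 / l)) := by
  obtain ⟨hl0, hl1⟩ := hl
  obtain ⟨hA0, hAlt⟩ := hA
  set c : ℝ := 1 / l with hc
  have hc1 : 1 ≤ c := (le_div_iff₀ hl0).mpr (by linarith)
  have hc0 : 0 < c := lt_of_lt_of_le one_pos hc1
  have hμA : μ * A < c := by
    have hμl : 0 < μ * l := mul_pos hμ hl0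
    rw [lt_div_iff₀ hμl] at hAlt
    rw [hc, lt_div_iff₀ hl0]
    nlinarith
  refine ⟨1, one_pos, fun n hn => ?_⟩
  have hm : (1:ℝ) ≤ (n:ℝ) := by exact_mod_cast hn
  set m : ℝ := (n:ℝ)
  have hm0 : 0 < m := lt_of_lt_of_le one_pos hm
  have hm1 : 0 < m + 1 := by linarith
  set u : ℝ := (m + 1) ^ (-(1/l)) with hu
  have hu0 : 0 < u := Real.rpow_pos_of_pos hm1 _
  -- (m+1)^(-(2/l)) = u^2
  have h2 : (m + 1) ^ (-(2/l)) = u ^ 2 := by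
    rw [hu, ← Real.rpow_natCast ((m+1) ^ (-(1/l))) 2, ← Real.rpow_mul (le_of_lt hm1)]
    norm_num
    ring_nf
  -- Bernoulli : 1 + c / m ≤ (1 + 1/m)^c
  have hber : 1 + c * (1/m) ≤ (1 + 1/m) ^ c :=
    one_add_mul_self_le_rpow_one_add (s := 1/m) ((by positivity : (0:ℝ) ≤ 1/m).trans' (by norm_num)) hc1
  -- (1 + 1/m)^c * u = m ^ (-c)
  have hkey : u + c * (1/m) * u ≤ m ^ (-(1/l)) := by
    have h1 : (1 + 1/m) ^ c * u = m ^ (-(1/l)) := by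
      rw [hu, Real.rpow_neg hm1.le, ← Real.inv_rpow hm1.le,
        ← Real.mul_rpow (by positivity) (by positivity),
        Real.rpow_neg hm0.le, ← Real.inv_rpow hm0.le]
      congr 1
      field_simp
    calc u + c * (1/m) * u = (1 + c * (1/m)) * u := by ring
      _ ≤ (1 + 1/m) ^ c * u := by
          exact mul_le_mul_of_nonneg_right hber hu0.le
      _ = m ^ (-(1/l)) := h1
  -- u ≤ 1/m
  have huinv : u ≤ 1/m := by
    have h1 : u ≤ m ^ (-(1:ℝ)) := by
      calc u ≤ m ^ (-(1/l)) :=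
              Real.rpow_le_rpow_of_nonpos hm0 (by linarith) (neg_nonpos.mpr (by positivity))
        _ ≤ m ^ (-(1:ℝ)) := Real.rpow_le_rpow_of_exponent_le hm (by linarith [hc1])
    rwa [Real.rpow_neg_one, ← one_div] at h1
  -- final
  have hfinal : μ * A ^ 2 * u ^ 2 ≤ A * (c * (1/m) * u) := by
    have : μ * A * u ≤ c * (1/m) := by
      calc μ * A * u ≤ c * u := mul_le_mul_of_nonneg_right hμA.le hu0.le
        _ ≤ c * (1/m) := mul_le_mul_of_nonneg_left huinv hc0.le
    calc μ * A ^ 2 * u ^ 2 = (A * u) * (μ * A * u) := by ring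
      _ ≤ (A * u) * (c * (1/m)) := mul_le_mul_of_nonneg_left this (by positivity)
      _ = A * (c * (1/m) * u) := by ring
  calc A * u + μ * A ^ 2 * (m+1) ^ (-(2/l))
      = A * u + μ * A ^ 2 * u ^ 2 := by rw [h2]
    _ ≤ A * u + A * (c * (1/m) * u) := by linarith
    _ = A * (u + c * (1/m) * u) := by ring
    _ ≤ A * (m ^ (-(1/l))) := mul_le_mul_of_nonneg_left hkey hA0.le
end
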